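/- Let G=(V,E) be a finite simple graph, s,t ∈ V two distinct terminal nodes, d a positive integer, and p : E → [0,1] edge reliabilities. Let P = (v₁,…,v_n) be a path in G, with edges eᵢ = {vᵢ,v_{i+1}} for i = 1,…,n−1, such that P is an induced subgraph of G, each internal vertex v₂,…,v_{n−1} is non-terminal and has degree 2 in G. Define p' : E → [0,1] by p'(eᵢ) = 1 for i = 1,…,n−2, p'(e_{n−1}) = ∏_{i=1}^{n−1} p(eᵢ), and p'(e) = p(e) for every edge e not on P. Then R^d_{{s,t},G}(p) = R^d_{{s,t},G}(p'). -/

import Mathlib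

open Classical Finset

noncomputable section

/-- The two-terminal diameter-constrained structure function `φ_d`:
`PhiStruct s t d E'` holds iff the spanning subgraph `(V, E')` contains a simple
`s`–`t` path with at most `d` edges. -/
def PhiStruct {V : Type*} (s t : V) (d : ℕ) (E' : Finset (Sym2 V)) : Prop :=
  ∃ w : (SimpleGraph.fromEdgeSet (↑E' : Set (Sym2 V))).Walk s t, w.IsPath ∧ w.length ≤ d

/-- The edge `e` is irrelevant for `φ_d`: `φ_d (E' ∪ {e}) = φ_d (E' \ {e})`
for every subset `E'` of the edge set of `G`. -/
def Irrelevant {V : Type*} [Fintype V] [DecidableEq V]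
    (G : SimpleGraph V) [DecidableRel G.Adj] (s t : V) (d : ℕ) (e : Sym2 V) : Prop :=
  ∀ E' ⊆ G.edgeFinset,
    (PhiStruct s t d (insert e E') ↔ PhiStruct s t d (E'.erase e))

/-- The two-terminal diameter-constrained reliability of the network whose edge set is
the finite set `E`, with terminals `s, t`, diameter `d` and elementary reliabilities `p`:
`R = Σ_{E' ⊆ E} (Π_{e ∈ E'} p e) (Π_{e ∈ E \ E'} (1 - p e)) φ_d(E')`. -/
def DCR {V : Type*} [DecidableEq V] (E : Finset (Sym2 V)) (s t : V) (d : ℕ)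
    (p : Sym2 V → ℝ) : ℝ :=
  ∑ E' ∈ E.powerset,
    (∏ e ∈ E', p e) * (∏ e ∈ E \ E', (1 - p e)) * (if PhiStruct s t d E' then 1 else 0)

/-!
The edges of the path `w` behave as a single series edge. An `s`–`t` path `u` that uses one
edge of `w` uses all of them: at each interior vertex of `w`, which is interior to `u` as well
(it is not a terminal), both `G`-edges are forced into `u` because the vertex has degree 2.
Hence the structure function does not change when a proper subset of the edges of `w` is
added to an edge set disjoint from `w`, and summing over the states of the edges of `w` leaves
a reliability polynomial that depends on them only through the product of their
reliabilities, which the new reliabilities preserve.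
-/

namespace Finset
variable {α R : Type*} [DecidableEq α] [CommRing R]

theorem sum_powerset_union_of_disjoint {β : Type*} [AddCommMonoid β] {A B : Finset α}
    (hAB : Disjoint A B) (f : Finset α → β) :
    ∑ X ∈ (A ∪ B).powerset, f X = ∑ F ∈ A.powerset, ∑ S ∈ B.powerset, f (F ∪ S) := by
  induction B using Finset.induction_on generalizing f with
  | empty => simp
  | insert b B hb ih =>
    have hbA : b ∉ A := disjoint_right.mp hAB (mem_insert_self b B)
    have hAB' : Disjoint A B := hAB.mono_right (subset_insert b B)
    rw [union_insert, sum_powerset_insert (by simp [hb, hbA]), ih hAB', ih hAB',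
      ← sum_add_distrib]
    simp_rw [sum_powerset_insert hb, union_insert]

theorem prod_mul_prod_sdiff_union (r : α → R) {A P F S : Finset α} (hAP : Disjoint A P)
    (hF : F ⊆ A) (hS : S ⊆ P) :
    (∏ e ∈ F ∪ S, r e) * ∏ e ∈ (A ∪ P) \ (F ∪ S), (1 - r e)
      = ((∏ e ∈ F, r e) * ∏ e ∈ A \ F, (1 - r e)) * ((∏ e ∈ S, r e) * ∏ e ∈ P \ S, (1 - r e)) := by
  have hsdiff : (A ∪ P) \ (F ∪ S) = (A \ F) ∪ (P \ S) := by
    ext e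
    have hd : e ∈ A → e ∉ P := fun h => disjoint_left.mp hAP h
    simp only [mem_sdiff, mem_union]
    grind
  rw [prod_union (hAP.mono hF hS), hsdiff,
    prod_union (hAP.mono sdiff_subset sdiff_subset)]
  ring

theorem sum_powerset_prod_mul_prod_sdiff (r : α → R) (P : Finset α) :
    ∑ S ∈ P.powerset, (∏ e ∈ S, r e) * ∏ e ∈ P \ S, (1 - r e) = 1 := by
  rw [← prod_add]
  simp

theorem sum_powerset_prod_mul_prod_sdiff_mul (r : α → R) {P : Finset α} (Φ : Finset α → R)
    {c : R} (hΦ : ∀ S ⊂ P, Φ S = c) :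
    ∑ S ∈ P.powerset, (∏ e ∈ S, r e) * (∏ e ∈ P \ S, (1 - r e)) * Φ S
      = (∏ e ∈ P, r e) * Φ P + (1 - ∏ e ∈ P, r e) * c := by
  have hproper : ∑ S ∈ P.powerset.erase P, (∏ e ∈ S, r e) * ∏ e ∈ P \ S, (1 - r e)
      = 1 - ∏ e ∈ P, r e := by
    have h := sum_powerset_prod_mul_prod_sdiff r P
    rw [← add_sum_erase _ _ (mem_powerset_self P), Finset.sdiff_self, prod_empty, mul_one] at h
    linear_combination h
  rw [← add_sum_erase _ _ (mem_powerset_self P), Finset.sdiff_self, prod_empty, mul_one,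
    ← hproper, sum_mul]
  congr 1
  refine sum_congr rfl fun S hS => ?_
  rw [hΦ S (ssubset_iff_subset_ne.mpr ⟨mem_powerset.mp (mem_of_mem_erase hS),
    ne_of_mem_erase hS⟩)]

theorem sum_powerset_prod_mul_prod_sdiff_mul_congr {A P : Finset α} (hAP : Disjoint A P)
    (Φ : Finset α → R) (hΦ : ∀ F ⊆ A, ∀ S ⊂ P, Φ (F ∪ S) = Φ F) {p q : α → R}
    (hA : ∀ e ∈ A, p e = q e) (hP : ∏ e ∈ P, p e = ∏ e ∈ P, q e) :
    ∑ X ∈ (A ∪ P).powerset, (∏ e ∈ X, p e) * (∏ e ∈ (A ∪ P) \ X, (1 - p e)) * Φ X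
      = ∑ X ∈ (A ∪ P).powerset, (∏ e ∈ X, q e) * (∏ e ∈ (A ∪ P) \ X, (1 - q e)) * Φ X := by
  have hsplit : ∀ r : α → R, ∑ X ∈ (A ∪ P).powerset,
      (∏ e ∈ X, r e) * (∏ e ∈ (A ∪ P) \ X, (1 - r e)) * Φ X
      = ∑ F ∈ A.powerset, ((∏ e ∈ F, r e) * ∏ e ∈ A \ F, (1 - r e)) *
          ((∏ e ∈ P, r e) * Φ (F ∪ P) + (1 - ∏ e ∈ P, r e) * Φ F) := fun r => by
    rw [sum_powerset_union_of_disjoint hAP]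
    refine sum_congr rfl fun F hF => ?_
    rw [← sum_powerset_prod_mul_prod_sdiff_mul r (fun S => Φ (F ∪ S))
      (hΦ F (mem_powerset.mp hF)), mul_sum]
    refine sum_congr rfl fun S hS => ?_
    rw [prod_mul_prod_sdiff_union r hAP (mem_powerset.mp hF) (mem_powerset.mp hS)]
    ring
  rw [hsplit, hsplit, hP]
  refine sum_congr rfl fun F hF => ?_
  have hAF : ∀ e ∈ F, p e = q e := fun e he => hA e (mem_powerset.mp hF he)
  congr 2
  · exact prod_congr rfl hAF
  · exact prod_congr rfl fun e he => by rw [hA e (mem_sdiff.mp he).1]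

end Finset

theorem List.prod_toFinset_ite_dropLast {α M : Type*} [DecidableEq α] [CommMonoid M]
    {l : List α} (hl : l.Nodup) (p : α → M) :
    ∏ e ∈ l.toFinset, (if e ∈ l.dropLast then 1 else if e ∈ l then (l.map p).prod else p e)
      = ∏ e ∈ l.toFinset, p e := by
  rw [List.prod_toFinset _ hl, List.prod_toFinset _ hl]
  rcases List.eq_nil_or_concat l with rfl | ⟨L, x, rfl⟩
  · simp
  rw [List.concat_eq_append] at hl ⊢
  have hx : x ∉ L := fun h =>
    (List.nodup_append.mp hl).2.2 x h x (List.mem_singleton_self x) rfl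
  rw [List.dropLast_concat, List.map_append, List.prod_append,
    List.prod_eq_one fun y hy => ?_, one_mul]
  · simp [hx]
  · obtain ⟨e, he, rfl⟩ := List.mem_map.mp hy
    exact if_pos he

namespace SimpleGraph.Walk
variable {V : Type*} {G : SimpleGraph V}

theorem IsPath.mem_edges_of_degree_eq_two [Fintype V] [DecidableRel G.Adj] {s t x y : V}
    {u : G.Walk s t} (hu : u.IsPath) (hx : x ∈ u.support) (hxs : x ≠ s) (hxt : x ≠ t)
    (hdeg : G.degree x = 2) (hxy : G.Adj x y) : s(x, y) ∈ u.edges := by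
  obtain ⟨i, rfl, hi⟩ := mem_support_iff_exists_getVert.mp hx
  have hi0 : i ≠ 0 := by rintro rfl; exact hxs u.getVert_zero
  have hilt : i < u.length := lt_of_le_of_ne hi (by rintro rfl; exact hxt u.getVert_length)
  have hsub : u.toSubgraph.neighborSet (u.getVert i) ⊆ G.neighborSet (u.getVert i) :=
    fun _ h => u.toSubgraph.adj_sub h
  -- the two neighbours of `x` along `u` already exhaust its two neighbours in `G`
  have hcard : (G.neighborSet (u.getVert i)).ncard ≤
      (u.toSubgraph.neighborSet (u.getVert i)).ncard := by
    rw [hu.ncard_neighborSet_toSubgraph_internal_eq_two hi0 hilt, ← hdeg,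
      ← card_neighborSet_eq_degree, Set.ncard_eq_toFinset_card', Set.toFinset_card]
  rw [← adj_toSubgraph_iff_mem_edges]
  have hy : y ∈ G.neighborSet (u.getVert i) := hxy
  rwa [← Set.eq_of_subset_of_ncard_le hsub hcard] at hy

theorem IsPath.edges_subset_of_mem_edges [Fintype V] [DecidableRel G.Adj] {s t : V}
    {u : G.Walk s t} (hu : u.IsPath) {a b : V} {q : G.Walk a b} (hq : q.IsPath)
    (hint : ∀ v ∈ q.support, v ≠ a → v ≠ b → v ≠ s ∧ v ≠ t ∧ G.degree v = 2)
    {e : Sym2 V} (heq : e ∈ q.edges) (heu : e ∈ u.edges) : q.edges ⊆ u.edges := by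
  induction q generalizing e with
  | nil => simp at heq
  | @cons c x b hcx q ih =>
    obtain ⟨hq, hc⟩ := cons_isPath_iff _ _ |>.mp hq
    have hint' : ∀ v ∈ q.support, v ≠ x → v ≠ b → v ≠ s ∧ v ≠ t ∧ G.degree v = 2 :=
      fun v hv hvx hvb => hint v (List.mem_cons_of_mem _ hv) (by rintro rfl; exact hc hv) hvb
    rw [edges_cons, List.cons_subset]
    by_cases hxb : x = b
    · subst hxb
      obtain rfl := (isPath_iff_nil.mp hq).eq_nil
      simp_all
    obtain ⟨y, hxy, q', rfl⟩ := q.exists_eq_cons_of_ne hxb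
    have hxy_q : s(x, y) ∈ (cons hxy q').edges := List.mem_cons_self
    have hxu : x ∈ u.support := by
      rcases List.mem_cons.mp heq with rfl | heq
      · exact u.snd_mem_support_of_mem_edges heu
      · exact u.fst_mem_support_of_mem_edges (ih hq hint' heq heu hxy_q)
    obtain ⟨hxs, hxt, hdeg⟩ := hint x (List.mem_cons_of_mem _ (start_mem_support _)) hcx.ne' hxb
    have hxy_u := hu.mem_edges_of_degree_eq_two hxu hxs hxt hdeg hxy
    refine ⟨?_, ih hq hint' hxy_q hxy_u⟩
    rw [Sym2.eq_swap]
    exact hu.mem_edges_of_degree_eq_two hxu hxs hxt hdeg hcx.symm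

theorem mem_of_mem_edges_fromEdgeSet {E : Set (Sym2 V)} {s t : V}
    (u : (fromEdgeSet E).Walk s t) {e : Sym2 V} (he : e ∈ u.edges) : e ∈ E := by
  have := u.edges_subset_edgeSet he
  rw [edgeSet_fromEdgeSet] at this
  exact this.1

end SimpleGraph.Walk

open SimpleGraph

section PhiStruct
variable {V : Type*} {s t : V} {d : ℕ}

theorem phiStruct_of_isPath {H : SimpleGraph V} {E : Finset (Sym2 V)} (u : H.Walk s t)
    (hu : u.IsPath) (hlen : u.length ≤ d) (hE : ∀ e ∈ u.edges, e ∈ E) : PhiStruct s t d E :=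
  ⟨u.transfer _ fun e he => by
      rw [edgeSet_fromEdgeSet]
      exact ⟨hE e he, H.not_isDiag_of_mem_edgeSet (u.edges_subset_edgeSet he)⟩,
    hu.transfer _, by rwa [Walk.length_transfer]⟩

theorem PhiStruct.mono {E₁ E₂ : Finset (Sym2 V)} (h : E₁ ⊆ E₂) (hφ : PhiStruct s t d E₁) :
    PhiStruct s t d E₂ :=
  let ⟨u, hu, hlen⟩ := hφ
  phiStruct_of_isPath u hu hlen fun _ he => h (u.mem_of_mem_edges_fromEdgeSet he)

theorem phiStruct_union_iff_of_ssubset [Fintype V] [DecidableEq V] {G : SimpleGraph V}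
    [DecidableRel G.Adj]
    {a b : V} {w : G.Walk a b} (hw : w.IsPath)
    (hint : ∀ v ∈ w.support, v ≠ a → v ≠ b → v ≠ s ∧ v ≠ t ∧ G.degree v = 2)
    {F S : Finset (Sym2 V)} (hF : F ⊆ G.edgeFinset) (hFw : Disjoint F w.edges.toFinset)
    (hS : S ⊂ w.edges.toFinset) :
    PhiStruct s t d (F ∪ S) ↔ PhiStruct s t d F := by
  refine ⟨fun ⟨u, hu, hlen⟩ => phiStruct_of_isPath u hu hlen fun e he => ?_,
    PhiStruct.mono subset_union_left⟩
  have hFS : ∀ e ∈ u.edges, e ∈ F ∪ S := fun _ he => u.mem_of_mem_edges_fromEdgeSet he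
  have hG : ∀ e ∈ u.edges, e ∈ G.edgeSet := fun e he =>
    (mem_union.mp (hFS e he)).elim (fun h => mem_edgeFinset.mp (hF h))
      (fun h => w.edges_subset_edgeSet (List.mem_toFinset.mp (hS.subset h)))
  -- an edge of `S` on `u` would drag every edge of `w` into `u`, hence into `S`
  refine (mem_union.mp (hFS e he)).resolve_right fun heS => hS.not_subset fun f hf => ?_
  have hwu := (hu.transfer hG).edges_subset_of_mem_edges hw hint
    (List.mem_toFinset.mp (hS.subset heS)) (by rwa [Walk.edges_transfer])
  rw [Walk.edges_transfer] at hwu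
  exact (mem_union.mp (hFS f (hwu (List.mem_toFinset.mp hf)))).resolve_left
    (disjoint_right.mp hFw hf)

end PhiStruct

theorem dcr_perfect_path_general
    {V : Type*} [Fintype V] [DecidableEq V] (G : SimpleGraph V) [DecidableRel G.Adj]
    (s t : V) (d : ℕ)
    (p : Sym2 V → ℝ)
    (a b : V) (w : G.Walk a b) (hw : w.IsPath)
    (hint : ∀ v ∈ w.support, v ≠ a → v ≠ b → v ≠ s ∧ v ≠ t ∧ G.degree v = 2) :
    DCR G.edgeFinset s t d p
      = DCR G.edgeFinset s t d
          (fun e => if e ∈ w.edges.dropLast then 1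
                    else if e ∈ w.edges then (w.edges.map p).prod
                    else p e) := by
  set P := w.edges.toFinset
  have hPG : P ⊆ G.edgeFinset := fun e he =>
    mem_edgeFinset.mpr (w.edges_subset_edgeSet (List.mem_toFinset.mp he))
  unfold DCR
  rw [← sdiff_union_of_subset hPG]
  refine sum_powerset_prod_mul_prod_sdiff_mul_congr sdiff_disjoint _ (fun F hF S hS => ?_)
    (fun e he => ?_) (List.prod_toFinset_ite_dropLast hw.isTrail.edges_nodup p).symm
  · rw [phiStruct_union_iff_of_ssubset hw hint (hF.trans sdiff_subset)
      (disjoint_of_subset_left hF sdiff_disjoint) hS]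
  · have hew : e ∉ w.edges := fun h => (mem_sdiff.mp he).2 (List.mem_toFinset.mpr h)
    rw [if_neg fun h => hew (List.dropLast_subset _ h), if_neg hew]

/-- Perfect-Path: let `P` be an induced path of `G` (from `a` to `b`)
all of whose internal vertices are non-terminal and of degree 2 in `G`.  Replacing the
reliabilities of all edges of `P` but the last by `1`, and that of the last edge by the
product of the reliabilities of all edges of `P`, leaves the diameter-constrained
reliability unchanged. -/
theorem dcr_perfect_path
    {V : Type*} [Fintype V] [DecidableEq V] (G : SimpleGraph V) [DecidableRel G.Adj]
    (s t : V) (hst : s ≠ t) (d : ℕ) (hd : 1 ≤ d)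
    (p : Sym2 V → ℝ) (hp : ∀ e ∈ G.edgeSet, 0 ≤ p e ∧ p e ≤ 1)
    (a b : V) (w : G.Walk a b) (hw : w.IsPath)
    (hind : ∀ u v : V, u ∈ w.support → v ∈ w.support → G.Adj u v → s(u, v) ∈ w.edges)
    (hint : ∀ v ∈ w.support, v ≠ a → v ≠ b → v ≠ s ∧ v ≠ t ∧ G.degree v = 2) :
    DCR G.edgeFinset s t d p
      = DCR G.edgeFinset s t d
          (fun e => if e ∈ w.edges.dropLast then 1
                    else if e ∈ w.edges then (w.edges.map p).prod
                    else p e) :=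
  dcr_perfect_path_general G s t d p a b w hw hint
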